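/- arXiv:2410.02913 — 4 statements merged into one kernel-verified Lean document; each statement's English description precedes it below -/
import Mathlib

section
/- For every permutation ζ of a finite set Ω, there exists an involution τ ∈ Sym(Ω) (i.e., τ² = Id) such that d_H(ζ, τ) = d_H(ζ², Id), where d_H(α, β) = (1/|Ω|)·|{x ∈ Ω : α.x ≠ β.x}|. -/
/-- Normalized Hamming distance on `Sym(Ω)` for a finite type `Ω`. -/
noncomputable def dHp {Ω : Type*} [Fintype Ω] [DecidableEq Ω] (a b : Equiv.Perm Ω) : ℝ :=
  ((Finset.univ.filter fun x : Ω => a x ≠ b x).card : ℝ) / Fintype.card Ω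

theorem stmt2 {Ω : Type*} [Fintype Ω] [DecidableEq Ω] (ζ : Equiv.Perm Ω) :
    ∃ τ : Equiv.Perm Ω, τ ^ 2 = 1 ∧ dHp ζ τ = dHp (ζ ^ 2) 1 := by
  classical
  set f : Ω → Ω := fun x => if ζ (ζ x) = x then ζ x else x with hf
  have hinv : Function.Involutive f := by
    intro x
    by_cases h : ζ (ζ x) = x
    · have h2 : ζ (ζ (ζ x)) = ζ x := by rw [h]
      simp [hf, h, h2]
    · simp [hf, h]
  refine ⟨hinv.toPerm f, ?_, ?_⟩
  · ext x
    simp [pow_two, hinv x]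
  · unfold dHp
    congr 2
    apply congrArg Finset.card
    apply Finset.filter_congr
    intro x _
    have hτ : (hinv.toPerm f) x = f x := rfl
    by_cases h : ζ (ζ x) = x
    · simp [hτ, hf, h, pow_two]
    · constructor
      · intro _
        simpa [pow_two] using h
      · intro _
        simp [hτ, hf, h]
        intro he
        exact h (by rw [he, he])
end

section
/- Let ζ ∈ Sym(Ω) be an involution on a finite set Ω with d_H(ζ, Id) ≥ 1 − ε. Then there exists a finite set Σ ⊇ Ω with |Σ| = 2·⌈|Ω|/2⌉ and a fixed-point-free involution τ ∈ Sym(Σ) such that d_H(ζ, τ) ≤ 2ε, where d_H uses the errors convention (points of Σ \ Ω always count as disagreements). -/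
/-- Normalized Hamming distance with errors between `ζ ∈ Sym(Ω)` and `τ ∈ Sym(S)`,
where `Ω` is embedded in `S` (the role of `Σ`) via `e`: the fraction of points of `S`
that are either outside the image of `e` (errors) or on which the two permutations
disagree. -/
noncomputable def dHemb {Ω S : Type*} [Fintype Ω] [Fintype S] [DecidableEq S]
    (e : Ω ↪ S) (ζ : Equiv.Perm Ω) (τ : Equiv.Perm S) : ℝ :=
  ((Finset.univ.filter fun y : S => ¬ ∃ x : Ω, e x = y ∧ e (ζ x) = τ y).card : ℝ) /
    Fintype.card S

/-! An involution moves an even number `g` of points, since they come in pairs. Embed `Ω` into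
`Fin N`, `N = 2⌈|Ω|/2⌉`, keep `ζ` on its moved points and pair off the remaining `N - g` points
(the fixed points of `ζ` and, for odd `|Ω|`, the one new point) arbitrarily; this `N - g` is even.
The resulting `τ` disagrees with `ζ` on at most `N - g` points. The hypothesis says
`|Ω| - g ≤ ε|Ω|`, and for odd `|Ω|` the number `|Ω| - g` is odd, hence at least one, which pays
for the new point at the cost of a factor 2. -/

open Equiv Finset

namespace Equiv.Perm

variable {α : Type*} [Fintype α]

theorem exists_sq_eq_one_forall_ne_of_even_card (h : Even (Fintype.card α)) :
    ∃ σ : Perm α, σ ^ 2 = 1 ∧ ∀ x, σ x ≠ x := by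
  obtain ⟨m, hm⟩ := h
  let f : Fin m ⊕ Fin m ≃ α := Fintype.equivOfCardEq (by simp [hm])
  refine ⟨f.permCongrHom (Equiv.sumComm _ _), ?_, fun x => ?_⟩
  · rw [← map_pow]
    ext x
    rcases f.symm x with a | a <;> simp [sq]
  · rw [← f.apply_symm_apply x]
    rcases f.symm x with a | a <;> simp [permCongrHom, permCongr_apply]

variable [DecidableEq α]

theorem exists_sq_eq_one_forall_ne_eqOn_support (ζ : Perm α) (hζ : ζ ^ 2 = 1)
    (hα : Even (Fintype.card α)) :
    ∃ τ : Perm α, τ ^ 2 = 1 ∧ (∀ x, τ x ≠ x) ∧ ∀ x ∈ ζ.support, τ x = ζ x := by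
  have hfix : Even (Fintype.card {x // x ∉ ζ.support}) := by
    rw [Fintype.card_subtype_compl, Fintype.card_coe,
      Nat.even_sub (card_le_univ _), iff_true_left hα]
    exact even_iff_two_dvd.mpr (two_dvd_card_support hζ)
  obtain ⟨σ, hσ, hσx⟩ := exists_sq_eq_one_forall_ne_of_even_card hfix
  let ζ' : Perm {x // x ∈ ζ.support} := ζ.subtypePerm fun x => by simp
  have hζ' : ζ' ^ 2 = 1 := by
    ext
    simp [ζ', hζ]
  refine ⟨subtypeCongrHom _ (ζ', σ), ?_, fun x => ?_, fun x hx => ?_⟩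
  · rw [← map_pow, Prod.pow_mk, hσ, hζ', Prod.mk_one_one, map_one]
  · by_cases hx : x ∈ ζ.support
    · rw [subtypeCongrHom_apply, subtypeCongr.left_apply _ _ hx]
      exact mem_support.mp hx
    · rw [subtypeCongrHom_apply, subtypeCongr.right_apply _ _ hx]
      exact fun h => hσx _ (Subtype.ext h)
  · exact subtypeCongr.left_apply _ _ hx

theorem exists_sq_eq_one_forall_ne_apply_embedding {β : Type*} [Fintype β] [DecidableEq β]
    (ζ : Perm α) (hζ : ζ ^ 2 = 1) (e : α ↪ β) (hβ : Even (Fintype.card β)) :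
    ∃ τ : Perm β, τ ^ 2 = 1 ∧ (∀ y, τ y ≠ y) ∧ ∀ x ∈ ζ.support, τ (e x) = e (ζ x) := by
  have hζ' : ζ.viaEmbedding e ^ 2 = 1 := by
    rw [← viaEmbeddingHom_apply, ← map_pow, hζ, map_one]
  obtain ⟨τ, hτ, hτx, hτζ⟩ := exists_sq_eq_one_forall_ne_eqOn_support _ hζ' hβ
  refine ⟨τ, hτ, hτx, fun x hx => ?_⟩
  have hex : e x ∈ (ζ.viaEmbedding e).support := by
    rw [mem_support, viaEmbedding_apply, ne_eq, e.apply_eq_iff_eq]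
    exact mem_support.mp hx
  rw [hτζ _ hex, viaEmbedding_apply]

end Equiv.Perm

theorem dHp_one {Ω : Type*} [Fintype Ω] [DecidableEq Ω] (ζ : Equiv.Perm Ω) :
    dHp ζ 1 = (#ζ.support : ℝ) / Fintype.card Ω :=
  rfl

theorem dHemb_le_of_forall_mem_support {Ω S : Type*} [Fintype Ω] [DecidableEq Ω] [Fintype S]
    [DecidableEq S] (e : Ω ↪ S) (ζ : Equiv.Perm Ω) (τ : Equiv.Perm S)
    (h : ∀ x ∈ ζ.support, τ (e x) = e (ζ x)) :
    dHemb e ζ τ ≤ ((Fintype.card S : ℝ) - #ζ.support) / Fintype.card S := by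
  have hbad : univ.filter (fun y => ¬ ∃ x, e x = y ∧ e (ζ x) = τ y) ⊆ (ζ.support.map e)ᶜ := by
    intro y hy
    simp only [mem_filter, mem_univ, true_and, not_exists, not_and] at hy
    simp only [mem_compl, mem_map, not_exists, not_and]
    rintro x hx rfl
    exact hy x rfl (h x hx).symm
  have hcard := card_le_card hbad
  rw [card_compl, card_map] at hcard
  have hsupp : #ζ.support ≤ Fintype.card S := (card_map e).symm.trans_le (card_le_univ _)
  unfold dHemb
  gcongr
  rw [← Nat.cast_sub hsupp]
  exact_mod_cast hcard

theorem sub_div_le_two_mul_of_even {n g : ℕ} {ε : ℝ} (hg : Even g) (hgn : g ≤ n)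
    (h : 1 - ε ≤ (g : ℝ) / n) :
    (((2 * ((n + 1) / 2) : ℕ) : ℝ) - g) / (2 * ((n + 1) / 2) : ℕ) ≤ 2 * ε := by
  rcases Nat.eq_zero_or_pos n with rfl | hn
  · simp only [Nat.cast_zero, div_zero] at h
    simp only [zero_add, Nat.reduceDiv, mul_zero, Nat.cast_zero, div_zero]
    linarith
  have hnR : (0 : ℝ) < n := by exact_mod_cast hn
  have hgn' : (g : ℝ) ≤ n := by exact_mod_cast hgn
  have hfix : (n : ℝ) - g ≤ ε * n := by
    rw [le_div_iff₀ hnR] at h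
    linarith
  rcases Nat.even_or_odd n with ⟨k, hk⟩ | ⟨k, hk⟩
  · have hN : 2 * ((n + 1) / 2) = n := by omega
    rw [hN, div_le_iff₀ hnR]
    nlinarith
  · have hN : 2 * ((n + 1) / 2) = n + 1 := by omega
    have hodd : (1 : ℝ) ≤ n - g := by
      obtain ⟨j, hj⟩ := hg
      have : (g : ℝ) + 1 ≤ n := by exact_mod_cast (by omega : g + 1 ≤ n)
      linarith
    rw [hN, div_le_iff₀ (by positivity)]
    push_cast
    nlinarith

theorem stmt3 {Ω : Type*} [Fintype Ω] [DecidableEq Ω] (ζ : Equiv.Perm Ω)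
    (hζ : ζ ^ 2 = 1) (ε : ℝ) (h : 1 - ε ≤ dHp ζ 1) :
    ∃ (e : Ω ↪ Fin (2 * ((Fintype.card Ω + 1) / 2)))
      (τ : Equiv.Perm (Fin (2 * ((Fintype.card Ω + 1) / 2)))),
      τ ^ 2 = 1 ∧ (∀ y, τ y ≠ y) ∧ dHemb e ζ τ ≤ 2 * ε := by
  have hcard : Fintype.card Ω ≤ 2 * ((Fintype.card Ω + 1) / 2) := by omega
  let e := (Fintype.equivFin Ω).toEmbedding.trans (Fin.castLEEmb hcard)
  obtain ⟨τ, hτ, hτ_ne, hτ_eq⟩ :=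
    Perm.exists_sq_eq_one_forall_ne_apply_embedding ζ hζ e (by simp)
  refine ⟨e, τ, hτ, hτ_ne, ?_⟩
  calc dHemb e ζ τ ≤ _ := dHemb_le_of_forall_mem_support e ζ τ hτ_eq
    _ ≤ 2 * ε := by
      rw [Fintype.card_fin]
      exact sub_div_le_two_mul_of_even (even_iff_two_dvd.mpr (Perm.two_dvd_card_support hζ))
        (card_le_univ _) (by rwa [dHp_one] at h)
end

section
/- Let Ω be a finite set and Ω± = {+,−} × Ω, with the sign-flip permutation −Id ∈ Sym(Ω±) sending (s, x) to (−s, x). For every permutation ζ ∈ Sym(Ω±) there exists σ ∈ Sym(Ω±) commuting with −Id such that d_H(σ, ζ) ≤ d_H([−Id, ζ], Id), where [a,b] = aba⁻¹b⁻¹ and d_H is the normalized Hamming metric on Sym(Ω±). -/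
/-- The sign flip `-Id` on `Ω± = {+,−} × Ω` (signs modeled by `Bool`). -/
def negId (Ω : Type*) : Equiv.Perm (Bool × Ω) :=
  Function.Involutive.toPerm (fun p => (!p.1, p.2)) (fun p => by simp)

/-!
Let `τ = -Id`. The Hamming distance is right-invariant, so `d_H([τ, ζ], 1) = d_H(τ ζ τ⁻¹, ζ)`
counts the points where `ζ` fails to be `τ`-equivariant. The points where it is equivariant
come in `τ`-pairs `{(+, x), (-, x)}`, and on them `ζ` induces an injection `x ↦ (ζ (+, x)).2`
of `Ω`. Extending it to `π ∈ Sym(Ω)` and remembering the signs of `ζ (+, x)` gives a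
`τ`-equivariant `σ` that agrees with `ζ` at every equivariant point.
-/

theorem Set.InjOn.exists_perm_extend {α : Type*} [Finite α] {s : Set α} {f : α → α}
    (hf : Set.InjOn f s) : ∃ π : Equiv.Perm α, ∀ x ∈ s, π x = f x := by
  classical
  exact ⟨(Equiv.Set.imageOfInjOn f s hf).extendSubtype, fun x hx => by
    rw [Equiv.extendSubtype_apply_of_mem _ x hx]; rfl⟩

section dHp

variable {α : Type*} [Fintype α] [DecidableEq α]

theorem dHp_mul_right (a b c : Equiv.Perm α) : dHp (a * c) (b * c) = dHp a b := by
  unfold dHp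
  congr 2
  simp only [← Fintype.card_subtype]
  exact Fintype.card_congr (c.subtypeEquiv fun _ => Iff.rfl)

theorem dHp_le_dHp_of_ne_imp_ne {a b c d : Equiv.Perm α} (h : ∀ x, a x ≠ b x → c x ≠ d x) :
    dHp a b ≤ dHp c d := by
  unfold dHp
  gcongr ((?_ : ℕ) : ℝ) / _
  exact Finset.card_le_card (Finset.monotone_filter_right _ fun x _ => h x)

theorem dHp_commutator_one (a b : Equiv.Perm α) :
    dHp (a * b * a⁻¹ * b⁻¹) 1 = dHp (a * b * a⁻¹) b := by
  rw [← dHp_mul_right _ _ b, inv_mul_cancel_right, one_mul]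

end dHp

section negId

variable {Ω : Type*}

@[simp]
theorem negId_apply (p : Bool × Ω) : negId Ω p = (!p.1, p.2) := rfl

@[simp]
theorem negId_inv : (negId Ω)⁻¹ = negId Ω := rfl

theorem eq_or_eq_negId_of_snd_eq {p q : Bool × Ω} (h : p.2 = q.2) :
    p = q ∨ p = negId Ω q := by
  obtain ⟨s, x⟩ := p
  obtain ⟨t, y⟩ := q
  cases s <;> cases t <;> simp_all

theorem negId_conj_apply_eq_iff (ζ : Equiv.Perm (Bool × Ω)) (s : Bool) (x : Ω) :
    negId Ω (ζ ((negId Ω)⁻¹ (s, x))) = ζ (s, x) ↔ ζ (false, x) = negId Ω (ζ (true, x)) := by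
  cases s
  · exact eq_comm
  · rw [negId_inv, ← Equiv.eq_symm_apply]; rfl

end negId

def signedPerm {Ω : Type*} (π : Equiv.Perm Ω) (ε : Ω → Bool) : Equiv.Perm (Bool × Ω) where
  toFun p := (xor p.1 (ε p.2), π p.2)
  invFun p := (xor p.1 (ε (π.symm p.2)), π.symm p.2)
  left_inv p := by simp
  right_inv p := by simp

@[simp]
theorem signedPerm_apply {Ω : Type*} (π : Equiv.Perm Ω) (ε : Ω → Bool) (p : Bool × Ω) :
    signedPerm π ε p = (xor p.1 (ε p.2), π p.2) := rfl

theorem signedPerm_mul_negId {Ω : Type*} (π : Equiv.Perm Ω) (ε : Ω → Bool) :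
    signedPerm π ε * negId Ω = negId Ω * signedPerm π ε := by
  ext p <;> simp

theorem exists_commute_negId_and_eq_of_conj_eq {Ω : Type*} [Finite Ω]
    (ζ : Equiv.Perm (Bool × Ω)) :
    ∃ σ : Equiv.Perm (Bool × Ω), σ * negId Ω = negId Ω * σ ∧
      ∀ p, negId Ω (ζ ((negId Ω)⁻¹ p)) = ζ p → σ p = ζ p := by
  set S : Set Ω := {x | ζ (false, x) = negId Ω (ζ (true, x))}
  have hinj : S.InjOn fun x => (ζ (true, x)).2 := by
    intro x hx y hy hxy
    rcases eq_or_eq_negId_of_snd_eq hxy with h | h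
    · simpa using ζ.injective h
    · rw [← hy.out] at h
      simpa using ζ.injective h
  obtain ⟨π, hπ⟩ := hinj.exists_perm_extend
  refine ⟨signedPerm π fun x => !(ζ (true, x)).1, signedPerm_mul_negId _ _, ?_⟩
  rintro ⟨s, x⟩ hp
  have hx : x ∈ S := (negId_conj_apply_eq_iff ζ s x).1 hp
  cases s
  · rw [hx.out]; ext <;> simp [hπ x hx]
  · ext <;> simp [hπ x hx]

theorem stmt4 {Ω : Type*} [Fintype Ω] [DecidableEq Ω] (ζ : Equiv.Perm (Bool × Ω)) :
    ∃ σ : Equiv.Perm (Bool × Ω), σ * negId Ω = negId Ω * σ ∧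
      dHp σ ζ ≤ dHp (negId Ω * ζ * (negId Ω)⁻¹ * ζ⁻¹) 1 := by
  obtain ⟨σ, hσ, hσζ⟩ := exists_commute_negId_and_eq_of_conj_eq ζ
  refine ⟨σ, hσ, ?_⟩
  rw [dHp_commutator_one]
  exact dHp_le_dHp_of_ne_imp_ne fun p hp hconj => hp (hσζ p hconj)
end

section
/- Let 0 → Z/2Z →^ι Γ̃ →^π Γ → 1 be a central extension with τ = ι(1), and suppose τ is nontrivial in Γ̃ but becomes trivial in every finite quotient of Γ̃. Then for every finite-index subgroup H̃ ≤ Γ̃ containing τ, the central extension 0 → Z/2Z → H̃ → π(H̃) → 1 does not split. -/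
/-! A splitting `s` of `π` over `π(H̃)` has image `s(π(H̃))`, a subgroup that meets `ker π = {1, τ}`
only in `1` and whose translates by `1` and `τ` cover `H̃`; so it has finite index in `Γ̃` and
does not contain `τ`. But a finite-index subgroup contains its normal core, the kernel of a
finite quotient of `Γ̃`, hence contains `τ`. -/

open Pointwise

namespace Subgroup

variable {G : Type*} [Group G]

theorem mem_of_forall_map_finite_eq_one {τ : G}
    (hτ : ∀ (Q : Type) [Group Q] [Finite Q] (f : G →* Q), f τ = 1)
    (M : Subgroup G) [M.FiniteIndex] : τ ∈ M := by
  let f : G →* Shrink.{0} (G ⧸ M.normalCore) :=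
    (Shrink.mulEquiv.{0} (α := G ⧸ M.normalCore)).symm.toMonoidHom.comp (QuotientGroup.mk' _)
  have hfτ : QuotientGroup.mk' M.normalCore τ = 1 := by
    simpa [f] using hτ _ f
  exact M.normalCore_le ((QuotientGroup.eq_one_iff τ).1 hfτ)

theorem finiteIndex_of_subset_finite_mul {K R : Subgroup G} [K.FiniteIndex] {F : Set G}
    (hF : F.Finite) (hcover : (K : Set G) ⊆ F * R) : R.FiniteIndex := by
  have : Finite F := hF
  suffices Finite (G ⧸ R) from finiteIndex_of_finite_quotient
  refine Finite.of_surjective (fun p : (G ⧸ K) × F => ((p.1.out * p.2 : G) : G ⧸ R)) fun q => ?_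
  obtain ⟨g, rfl⟩ := QuotientGroup.mk_surjective q
  have hk : (Quotient.out (g : G ⧸ K))⁻¹ * g ∈ K :=
    QuotientGroup.leftRel_apply.1 (Quotient.exact' (Quotient.out_eq' (g : G ⧸ K)))
  obtain ⟨f, hf, r, hr, hfr : f * r = _⟩ := hcover hk
  refine ⟨((g : G ⧸ K), ⟨f, hf⟩), QuotientGroup.eq.2 ?_⟩
  rwa [mul_inv_rev, mul_assoc, ← hfr, inv_mul_cancel_left]

end Subgroup

theorem MonoidHom.subset_ker_mul_range_of_section {G H : Type*} [Group G] [Group H]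
    (π : G →* H) (K : Subgroup G) (s : K.map π →* G) (hs : ∀ x, π (s x) = x) :
    (K : Set G) ⊆ (π.ker : Set G) * s.range := by
  intro k hk
  let y : K.map π := ⟨π k, k, hk, rfl⟩
  refine ⟨k * (s y)⁻¹, ?_, s y, ⟨y, rfl⟩, inv_mul_cancel_right k (s y)⟩
  simp [MonoidHom.mem_ker, hs y, y]

theorem stmt16_general {Gt G : Type*} [Group Gt] [Group G] (π : Gt →* G) (τ : Gt)
    (hτne : τ ≠ 1)
    (hker : ∀ g : Gt, π g = 1 ↔ g = 1 ∨ g = τ)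
    (hfin : ∀ (Q : Type) [Group Q] [Finite Q] (f : Gt →* Q), f τ = 1) :
    ∀ Ht : Subgroup Gt, Ht.FiniteIndex → τ ∈ Ht →
      ¬ ∃ s : (Subgroup.map π Ht) →* Gt,
          (∀ x : Subgroup.map π Ht, s x ∈ Ht) ∧
          ∀ x : Subgroup.map π Ht, π (s x) = (x : G) := by
  rintro Ht hHt - ⟨s, -, hs⟩
  have hker_finite : (π.ker : Set Gt).Finite :=
    (Set.toFinite {1, τ}).subset fun g hg => (hker g).1 hg
  have : s.range.FiniteIndex := Subgroup.finiteIndex_of_subset_finite_mul hker_finite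
    (π.subset_ker_mul_range_of_section Ht s hs)
  obtain ⟨x, hx⟩ := Subgroup.mem_of_forall_map_finite_eq_one hfin s.range
  have hx1 : x = 1 := Subtype.ext <| by
    rw [← hs x, hx, (hker τ).2 (Or.inr rfl), Subgroup.coe_one]
  exact hτne (by rw [← hx, hx1, map_one])

/-- Let `0 → Z/2Z → Γ̃ →^π Γ → 1` be a central extension with `τ` the nontrivial
element of the kernel (so `ker π = {1, τ}`), and suppose `τ ≠ 1` but `τ` dies in
every finite quotient of `Γ̃`. Then for every finite-index subgroup `H̃ ≤ Γ̃`
containing `τ`, the induced central extension `0 → Z/2Z → H̃ → π(H̃) → 1` does not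
split. -/
theorem stmt16 {Gt G : Type*} [Group Gt] [Group G] (π : Gt →* G) (τ : Gt)
    (hτ2 : τ ^ 2 = 1) (hτne : τ ≠ 1)
    (hcentral : ∀ g : Gt, Commute τ g)
    (hker : ∀ g : Gt, π g = 1 ↔ g = 1 ∨ g = τ)
    (hπ : Function.Surjective π)
    (hfin : ∀ (Q : Type) [Group Q] [Finite Q] (f : Gt →* Q), f τ = 1) :
    ∀ Ht : Subgroup Gt, Ht.FiniteIndex → τ ∈ Ht →
      ¬ ∃ s : (Subgroup.map π Ht) →* Gt,
          (∀ x : Subgroup.map π Ht, s x ∈ Ht) ∧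
          ∀ x : Subgroup.map π Ht, π (s x) = (x : G) :=
  stmt16_general π τ hτne hker hfin
end
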